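/- arXiv:2410.18928 — 4 statements merged into one kernel-verified Lean document; each statement's English description precedes it below -/
import Mathlib

section
/- Let $f(\xi) = \min\{\|\mathbf{A}\mathbf{z}-\mathbf{y}\|_2 : \|\mathbf{z}\|_1 \le \xi\}$ and let $\xi_0 = \min\{\|\mathbf{z}\|_1 : \mathbf{A}^\dagger\mathbf{A}\mathbf{z} = \mathbf{A}^\dagger\mathbf{y}\}$. Then for $0 \le \xi \le \xi_0$: every minimizer $\mathbf{z}(\xi)$ satisfies $\|\mathbf{z}(\xi)\|_1 = \xi$, and $f$ is strictly decreasing on $[0,\xi_0]$; and for $\xi \ge \xi_0$, $f(\xi) = \sqrt{\mathbf{y}^\dagger\mathbf{y} - \mathbf{y}^\dagger\mathbf{A}\mathbf{A}^+\mathbf{y}}$, where $\mathbf{A}^+$ is the Moore–Penrose pseudoinverse. -/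
open Matrix

noncomputable def l1norm {D : ℕ} (z : Fin D → ℂ) : ℝ := ∑ j, ‖z j‖

noncomputable def l2norm {Γ : ℕ} (v : Fin Γ → ℂ) : ℝ :=
  Real.sqrt (∑ i, ‖v i‖ ^ 2)

/-- `resMin A y ξ = min { ‖Az - y‖₂ : ‖z‖₁ ≤ ξ }`. -/
noncomputable def resMin {Γ D : ℕ} (A : Matrix (Fin Γ) (Fin D) ℂ) (y : Fin Γ → ℂ)
    (ξ : ℝ) : ℝ :=
  sInf {r : ℝ | ∃ z : Fin D → ℂ, l1norm z ≤ ξ ∧ l2norm (A.mulVec z - y) = r}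

open Classical in
/-- The Moore–Penrose pseudoinverse, characterized by the four Penrose equations. -/
noncomputable def pinv {Γ D : ℕ} (A : Matrix (Fin Γ) (Fin D) ℂ) :
    Matrix (Fin D) (Fin Γ) ℂ :=
  if h : ∃ B : Matrix (Fin D) (Fin Γ) ℂ,
      A * B * A = A ∧ B * A * B = B ∧ (A * B)ᴴ = A * B ∧ (B * A)ᴴ = B * A
  then h.choose else 0

/-- `ξ₀ = min { ‖z‖₁ : AᴴA z = Aᴴ y }`. -/
noncomputable def xiZero {Γ D : ℕ} (A : Matrix (Fin Γ) (Fin D) ℂ) (y : Fin Γ → ℂ) : ℝ :=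
  sInf {r : ℝ | ∃ z : Fin D → ℂ, (Aᴴ * A).mulVec z = Aᴴ.mulVec y ∧ l1norm z = r}

/-
For ξ ≥ ξ₀ the ℓ¹-ball contains a solution of the normal equations AᴴA z = Aᴴ y; these are
exactly the unconstrained minimizers of ‖A z - y‖₂ (perturbing a minimizer along Aᴴ (A z - y)
shows the gradient vanishes, and Pythagoras gives the converse), and A⁺ y is one of them, whence
the value √(y†y - y†AA⁺y), A A⁺ being a Hermitian idempotent. For ξ ≤ ξ₀, a constrained minimizer
in the interior of the ball is a local, hence by convexity global, minimizer, so a solution of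
the normal equations of ℓ¹-norm below ξ₀: impossible. If f(a) = f(b) with a < b ≤ ξ₀, a
minimizer for a also minimizes over the larger ball while lying inside it, so f is strictly
decreasing. The pseudoinverse exists: A⁺ = (AᴴA)⁺ Aᴴ, where (AᴴA)⁺ is t ↦ t⁻¹ applied to AᴴA by
the functional calculus (with 0⁻¹ = 0, so that t t⁻¹ t = t for every eigenvalue t).
-/

section
open scoped ComplexOrder
variable {m n 𝕜 : Type*} [RCLike 𝕜] [Fintype m] [Fintype n]

theorem Matrix.IsHermitian.exists_penrose [DecidableEq n] {H : Matrix n n 𝕜}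
    (hH : H.IsHermitian) :
    ∃ G : Matrix n n 𝕜, H * G * H = H ∧ G * H * G = G ∧ Gᴴ = G ∧ Commute G H := by
  have hH' : IsSelfAdjoint H := hH
  have hmul (f g : ℝ → ℝ) : cfc f H * cfc g H = cfc (fun x => f x * g x) H :=
    (cfc_mul f g H (H.finite_real_spectrum.continuousOn _)
      (H.finite_real_spectrum.continuousOn _)).symm
  have hid : cfc (fun x : ℝ => x) H = H := cfc_id' ℝ H
  refine ⟨cfc (·⁻¹ : ℝ → ℝ) H, ?_, ?_, cfc_predicate (·⁻¹ : ℝ → ℝ) H, ?_⟩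
  · calc H * cfc (·⁻¹) H * H = cfc (fun x => x) H * cfc (·⁻¹) H * cfc (fun x => x) H := by
          rw [hid]
      _ = H := by
          rw [hmul, hmul]
          exact (cfc_congr fun (x : ℝ) _ => mul_inv_mul_cancel x).trans hid
  · calc cfc (·⁻¹) H * H * cfc (·⁻¹) H = cfc (·⁻¹) H * cfc (fun x => x) H * cfc (·⁻¹) H := by
          rw [hid]
      _ = cfc (·⁻¹) H := by
          rw [hmul, hmul]
          exact cfc_congr fun (x : ℝ) _ => by simpa using mul_inv_mul_cancel x⁻¹
  · simpa only [hid] using cfc_commute_cfc (·⁻¹) (fun x : ℝ => x) H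

theorem Matrix.mul_eq_zero_of_conjTranspose_mul_self_mul_eq_zero {A : Matrix m n 𝕜}
    {l : Type*} [Fintype l] {M : Matrix n l 𝕜} (h : Aᴴ * A * M = 0) : A * M = 0 := by
  rw [← conjTranspose_mul_self_eq_zero, conjTranspose_mul, Matrix.mul_assoc,
    ← Matrix.mul_assoc Aᴴ, h, Matrix.mul_zero]

theorem Matrix.exists_penrose [DecidableEq n] (A : Matrix m n 𝕜) :
    ∃ B : Matrix n m 𝕜,
      A * B * A = A ∧ B * A * B = B ∧ (A * B)ᴴ = A * B ∧ (B * A)ᴴ = B * A := by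
  obtain ⟨G, hHGH, hGHG, hG, hGH⟩ := (isHermitian_conjTranspose_mul_self A).exists_penrose
  have hAGH : A * (G * (Aᴴ * A)) = A := by
    have : Aᴴ * A * (G * (Aᴴ * A) - 1) = 0 := by
      rw [Matrix.mul_sub, ← Matrix.mul_assoc, hHGH, Matrix.mul_one, sub_self]
    simpa [Matrix.mul_sub, sub_eq_zero] using
      mul_eq_zero_of_conjTranspose_mul_self_mul_eq_zero this
  refine ⟨G * Aᴴ, ?_, ?_, ?_, ?_⟩
  · simpa only [Matrix.mul_assoc] using hAGH
  · simpa only [Matrix.mul_assoc] using congrArg (· * Aᴴ) hGHG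
  · simp only [conjTranspose_mul, conjTranspose_conjTranspose, hG, Matrix.mul_assoc]
  · rw [Matrix.mul_assoc, conjTranspose_mul, hG, (isHermitian_conjTranspose_mul_self A).eq, hGH.eq]
end

theorem Matrix.IsHermitian.star_mulVec_sub_dotProduct {n R : Type*} [Fintype n] [CommRing R]
    [StarRing R] {P : Matrix n n R} (hP : P.IsHermitian) (hPP : IsIdempotentElem P) (y : n → R) :
    star (P *ᵥ y - y) ⬝ᵥ (P *ᵥ y - y) = star y ⬝ᵥ y - star y ⬝ᵥ P *ᵥ y := by
  have hPy : star (P *ᵥ y) = star y ᵥ* P := by rw [star_mulVec, hP.eq]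
  rw [star_sub, sub_dotProduct, dotProduct_sub, dotProduct_sub, hPy, ← dotProduct_mulVec,
    ← dotProduct_mulVec, mulVec_mulVec, hPP.eq]
  ring

section
variable {𝕜 E : Type*} [RCLike 𝕜] [NormedAddCommGroup E] [InnerProductSpace 𝕜 E]
open RCLike

theorem re_inner_eq_zero_of_forall_norm_le_norm_add_smul {u v : E}
    (h : ∀ t : ℝ, ‖u‖ ≤ ‖u + (t : 𝕜) • v‖) : re (inner 𝕜 u v) = 0 := by
  have hquad (t : ℝ) : 0 ≤ ‖v‖ ^ 2 * (t * t) + 2 * re (inner 𝕜 u v) * t + 0 := by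
    have := pow_le_pow_left₀ (norm_nonneg u) (h t) 2
    rw [norm_add_sq (𝕜 := 𝕜), inner_smul_real_right, norm_smul, norm_ofReal,
      real_smul_eq_coe_mul, re_ofReal_mul, mul_pow, sq_abs] at this
    linarith
  have := discrim_le_zero hquad
  rw [discrim] at this
  nlinarith

end

section
variable {m n 𝕜 : Type*} [RCLike 𝕜] [Fintype m] [Fintype n]

theorem Matrix.inner_toLp_mulVec (A : Matrix m n 𝕜) (u : m → 𝕜) (w : n → 𝕜) :
    inner 𝕜 (WithLp.toLp 2 u) (WithLp.toLp 2 (A *ᵥ w)) =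
      inner 𝕜 (WithLp.toLp 2 (Aᴴ *ᵥ u)) (WithLp.toLp 2 w) := by
  rw [EuclideanSpace.inner_toLp_toLp, EuclideanSpace.inner_toLp_toLp, star_mulVec,
    conjTranspose_conjTranspose, dotProduct_comm, dotProduct_mulVec, dotProduct_comm]

theorem Matrix.forall_norm_mulVec_sub_le_iff (A : Matrix m n 𝕜) (y : m → 𝕜) (z : n → 𝕜) :
    (∀ w, ‖WithLp.toLp 2 (A *ᵥ z - y)‖ ≤ ‖WithLp.toLp 2 (A *ᵥ w - y)‖) ↔
      (Aᴴ * A) *ᵥ z = Aᴴ *ᵥ y := by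
  rw [← mulVec_mulVec, ← sub_eq_zero, ← mulVec_sub]
  constructor
  · intro hmin
    -- perturb `z` along the descent direction `Aᴴ (A z - y)`
    have hre : RCLike.re (inner 𝕜 (WithLp.toLp 2 (A *ᵥ z - y))
        (WithLp.toLp 2 (A *ᵥ Aᴴ *ᵥ (A *ᵥ z - y)))) = 0 := by
      refine re_inner_eq_zero_of_forall_norm_le_norm_add_smul fun t => ?_
      have := hmin (z + (t : 𝕜) • Aᴴ *ᵥ (A *ᵥ z - y))
      rwa [mulVec_add, mulVec_smul, add_sub_right_comm] at this
    rw [inner_toLp_mulVec, inner_self_eq_norm_sq] at hre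
    simpa using hre
  · intro hr w
    have hsplit : A *ᵥ w - y = (A *ᵥ z - y) + A *ᵥ (w - z) := by
      rw [mulVec_sub]; abel
    have horth : inner 𝕜 (WithLp.toLp 2 (A *ᵥ z - y)) (WithLp.toLp 2 (A *ᵥ (w - z))) = 0 := by
      rw [inner_toLp_mulVec, hr, WithLp.toLp_zero, inner_zero_left]
    rw [hsplit, WithLp.toLp_add]
    refine le_of_pow_le_pow_left₀ two_ne_zero (norm_nonneg _) ?_
    rw [norm_add_sq (𝕜 := 𝕜), horth, map_zero, mul_zero, add_zero]
    exact le_add_of_nonneg_right (sq_nonneg _)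

theorem Matrix.convexOn_norm_mulVec_sub (A : Matrix m n 𝕜) (y : m → 𝕜) :
    ConvexOn ℝ Set.univ fun z => ‖WithLp.toLp 2 (A *ᵥ z - y)‖ := by
  refine ⟨convex_univ, fun z _ w _ a b ha hb hab => ?_⟩
  have hsplit : A *ᵥ (a • z + b • w) - y = a • (A *ᵥ z - y) + b • (A *ᵥ w - y) := by
    rw [smul_sub, smul_sub, sub_add_sub_comm, ← add_smul, hab, one_smul, mulVec_add,
      mulVec_smul, mulVec_smul]
  simp only [hsplit, WithLp.toLp_add, WithLp.toLp_smul, smul_eq_mul]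
  refine (norm_add_le _ _).trans ?_
  rw [norm_smul_of_nonneg ha, norm_smul_of_nonneg hb]

end

theorem IsMinOn.csInf_image_eq {α β : Type*} [ConditionallyCompleteLattice β] {f : α → β}
    {s : Set α} {a : α} (h : IsMinOn f s a) (ha : a ∈ s) : sInf (f '' s) = f a :=
  IsLeast.csInf_eq ⟨Set.mem_image_of_mem f ha, Set.forall_mem_image.2 h⟩

section
variable {Γ D : ℕ}

theorem l1norm_eq_norm_toLp (z : Fin D → ℂ) :
    l1norm z = ‖(WithLp.toLp 1 z : PiLp 1 fun _ : Fin D => ℂ)‖ := by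
  rw [PiLp.norm_eq_of_L1]; rfl

theorem continuous_l1norm : Continuous (l1norm (D := D)) := by
  simp only [funext l1norm_eq_norm_toLp]
  exact continuous_norm.comp (PiLp.continuous_toLp 1 _)

theorem isCompact_setOf_l1norm_le (c : ℝ) : IsCompact {z : Fin D → ℂ | l1norm z ≤ c} := by
  convert (isCompact_closedBall (0 : PiLp 1 fun _ : Fin D => ℂ) c).image
    (PiLp.continuous_ofLp 1 _)
  ext z
  simp only [Set.mem_ofPred_eq, Set.mem_image, Metric.mem_closedBall, dist_zero_right]
  exact ⟨fun hz => ⟨_, (l1norm_eq_norm_toLp z).symm.trans_le hz, rfl⟩,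
    by rintro ⟨x, hx, rfl⟩; rwa [l1norm_eq_norm_toLp]⟩

theorem IsClosed.exists_isMinOn_l1norm {S : Set (Fin D → ℂ)} (hS : IsClosed S)
    (hne : S.Nonempty) : ∃ z ∈ S, IsMinOn l1norm S z := by
  obtain ⟨z₁, hz₁⟩ := hne
  obtain ⟨z, ⟨-, hzS⟩, hmin⟩ :=
    ((isCompact_setOf_l1norm_le (l1norm z₁)).inter_right hS).exists_isMinOn
      ⟨z₁, le_refl (l1norm z₁), hz₁⟩ continuous_l1norm.continuousOn
  refine ⟨z, hzS, fun w hw => ?_⟩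
  by_cases hw₁ : l1norm w ≤ l1norm z₁
  · exact hmin ⟨hw₁, hw⟩
  · exact (hmin ⟨le_refl (l1norm z₁), hz₁⟩).trans (le_of_not_ge hw₁)

theorem l2norm_eq_norm_toLp (v : Fin Γ → ℂ) :
    l2norm v = ‖(WithLp.toLp 2 v : EuclideanSpace ℂ (Fin Γ))‖ := by
  rw [EuclideanSpace.norm_eq]; rfl

theorem l2norm_eq_sqrt_re_dotProduct (v : Fin Γ → ℂ) :
    l2norm v = Real.sqrt (star v ⬝ᵥ v).re := by
  rw [l2norm_eq_norm_toLp, ← RCLike.re_to_complex, ← dotProduct_comm,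
    ← EuclideanSpace.inner_toLp_toLp, inner_self_eq_norm_sq, Real.sqrt_sq (norm_nonneg _)]

theorem pinv_spec (A : Matrix (Fin Γ) (Fin D) ℂ) :
    A * pinv A * A = A ∧ pinv A * A * pinv A = pinv A ∧
      (A * pinv A)ᴴ = A * pinv A ∧ (pinv A * A)ᴴ = pinv A * A := by
  rw [pinv, dif_pos (exists_penrose A)]
  exact (exists_penrose A).choose_spec

theorem conjTranspose_mul_self_mul_pinv (A : Matrix (Fin Γ) (Fin D) ℂ) :
    Aᴴ * A * pinv A = Aᴴ := by
  obtain ⟨hABA, -, hAB, -⟩ := pinv_spec A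
  have := congrArg conjTranspose hABA
  rwa [conjTranspose_mul, hAB, ← Matrix.mul_assoc] at this

end

section
variable {Γ D : ℕ} (A : Matrix (Fin Γ) (Fin D) ℂ) (y : Fin Γ → ℂ)

theorem forall_l2norm_mulVec_sub_le_iff (z : Fin D → ℂ) :
    (∀ w, l2norm (A *ᵥ z - y) ≤ l2norm (A *ᵥ w - y)) ↔ (Aᴴ * A) *ᵥ z = Aᴴ *ᵥ y := by
  simpa only [l2norm_eq_norm_toLp] using A.forall_norm_mulVec_sub_le_iff y z

theorem convexOn_l2norm_mulVec_sub : ConvexOn ℝ Set.univ fun z => l2norm (A *ᵥ z - y) := by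
  simpa only [l2norm_eq_norm_toLp] using A.convexOn_norm_mulVec_sub y

theorem exists_l1norm_eq_xiZero :
    ∃ z, (Aᴴ * A) *ᵥ z = Aᴴ *ᵥ y ∧ l1norm z = xiZero A y := by
  have hne : {z | (Aᴴ * A) *ᵥ z = Aᴴ *ᵥ y}.Nonempty :=
    ⟨pinv A *ᵥ y, by rw [Set.mem_ofPred_eq, mulVec_mulVec, conjTranspose_mul_self_mul_pinv]⟩
  obtain ⟨z, hz, hmin⟩ :=
    (isClosed_eq (by fun_prop) continuous_const).exists_isMinOn_l1norm hne
  exact ⟨z, hz, (hmin.csInf_image_eq hz).symm⟩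

theorem xiZero_le_l1norm {z : Fin D → ℂ} (hz : (Aᴴ * A) *ᵥ z = Aᴴ *ᵥ y) :
    xiZero A y ≤ l1norm z :=
  csInf_le ⟨0, by rintro _ ⟨w, -, rfl⟩; exact Finset.sum_nonneg fun _ _ => norm_nonneg _⟩
    ⟨z, hz, rfl⟩

theorem exists_isMinOn_l2norm_mulVec_sub {ξ : ℝ} (hξ : 0 ≤ ξ) :
    ∃ z, l1norm z ≤ ξ ∧ IsMinOn (fun z => l2norm (A *ᵥ z - y)) {z | l1norm z ≤ ξ} z := by
  refine (isCompact_setOf_l1norm_le ξ).exists_isMinOn ⟨0, by simpa [l1norm] using hξ⟩ ?_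
  simp only [l2norm_eq_norm_toLp]
  fun_prop

theorem resMin_eq_of_isMinOn {ξ : ℝ} {z : Fin D → ℂ} (hz : l1norm z ≤ ξ)
    (hmin : IsMinOn (fun z => l2norm (A *ᵥ z - y)) {z | l1norm z ≤ ξ} z) :
    resMin A y ξ = l2norm (A *ᵥ z - y) :=
  hmin.csInf_image_eq hz

theorem resMin_eq_of_xiZero_le {ξ : ℝ} (hξ : xiZero A y ≤ ξ) :
    resMin A y ξ = Real.sqrt ((star y ⬝ᵥ y - star y ⬝ᵥ A *ᵥ pinv A *ᵥ y).re) := by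
  obtain ⟨z₀, hz₀, hz₀ξ⟩ := exists_l1norm_eq_xiZero A y
  obtain ⟨hABA, -, hAB, -⟩ := pinv_spec A
  have hpinv : (Aᴴ * A) *ᵥ pinv A *ᵥ y = Aᴴ *ᵥ y := by
    rw [mulVec_mulVec, conjTranspose_mul_self_mul_pinv]
  have hidem : IsIdempotentElem (A * pinv A) := by
    rw [IsIdempotentElem, ← Matrix.mul_assoc, hABA]
  calc resMin A y ξ = l2norm (A *ᵥ z₀ - y) :=
        resMin_eq_of_isMinOn A y (hz₀ξ ▸ hξ)
          fun w _ => (forall_l2norm_mulVec_sub_le_iff A y z₀).2 hz₀ w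
    _ = l2norm (A *ᵥ pinv A *ᵥ y - y) :=
        le_antisymm ((forall_l2norm_mulVec_sub_le_iff A y z₀).2 hz₀ _)
          ((forall_l2norm_mulVec_sub_le_iff A y _).2 hpinv _)
    _ = _ := by
        rw [l2norm_eq_sqrt_re_dotProduct, mulVec_mulVec,
          IsHermitian.star_mulVec_sub_dotProduct hAB hidem]

theorem l1norm_eq_of_isMinOn_of_le_xiZero {ξ : ℝ} (hξ : ξ ≤ xiZero A y) {z : Fin D → ℂ}
    (hz : l1norm z ≤ ξ) (hmin : IsMinOn (fun z => l2norm (A *ᵥ z - y)) {z | l1norm z ≤ ξ} z) :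
    l1norm z = ξ := by
  refine hz.eq_of_not_lt fun hlt => ?_
  have hball : {w | l1norm w ≤ ξ} ∈ nhds z :=
    (continuous_l1norm.tendsto z).eventually (ge_mem_nhds hlt)
  have hglobal := IsMinOn.of_isLocalMin_of_convex_univ (hmin.isLocalMin hball)
    (convexOn_l2norm_mulVec_sub A y)
  have := xiZero_le_l1norm A y ((forall_l2norm_mulVec_sub_le_iff A y z).1 hglobal)
  linarith

theorem strictAntiOn_resMin : StrictAntiOn (resMin A y) (Set.Icc 0 (xiZero A y)) := by
  intro a ha b hb hab
  obtain ⟨za, hza, hmina⟩ := exists_isMinOn_l2norm_mulVec_sub A y ha.1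
  obtain ⟨zb, hzb, hminb⟩ := exists_isMinOn_l2norm_mulVec_sub A y hb.1
  rw [resMin_eq_of_isMinOn A y hza hmina, resMin_eq_of_isMinOn A y hzb hminb]
  refine (hminb (hza.trans hab.le)).lt_of_ne fun heq => ?_
  have hmina' : IsMinOn (fun z => l2norm (A *ᵥ z - y)) {z | l1norm z ≤ b} za :=
    fun w hw => heq.ge.trans (hminb hw)
  have := l1norm_eq_of_isMinOn_of_le_xiZero A y hb.2 (hza.trans hab.le) hmina'
  linarith

end

/-- Properties of `f(ξ) = min {‖Az-y‖₂ : ‖z‖₁ ≤ ξ}`: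
(i) for `ξ₀ ≤ ξ`, `f(ξ) = √(y†y − y†AA⁺y)`;
(ii) for `0 ≤ ξ ≤ ξ₀`, every minimizer `z(ξ)` satisfies `‖z(ξ)‖₁ = ξ`;
(iii) `f` is strictly decreasing on `[0, ξ₀]`. -/
theorem stmt9 {Γ D : ℕ} (A : Matrix (Fin Γ) (Fin D) ℂ) (y : Fin Γ → ℂ) :
    (∀ ξ : ℝ, xiZero A y ≤ ξ →
      resMin A y ξ =
        Real.sqrt ((star y ⬝ᵥ y - star y ⬝ᵥ A.mulVec ((pinv A).mulVec y)).re)) ∧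
    (∀ ξ : ℝ, 0 ≤ ξ → ξ ≤ xiZero A y → ∀ z : Fin D → ℂ, l1norm z ≤ ξ →
      (∀ z' : Fin D → ℂ, l1norm z' ≤ ξ →
        l2norm (A.mulVec z - y) ≤ l2norm (A.mulVec z' - y)) →
      l1norm z = ξ) ∧
    StrictAntiOn (resMin A y) (Set.Icc 0 (xiZero A y)) :=
  ⟨fun _ hξ => resMin_eq_of_xiZero_le A y hξ,
    fun _ _ hξ _ hz hmin => l1norm_eq_of_isMinOn_of_le_xiZero A y hξ hz hmin,
    strictAntiOn_resMin A y⟩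
end

section
/- With $f$ and $\xi_0$ as above, suppose $\sqrt{\Gamma}\eta > f(\xi_0)$, there exists $\mathbf{x}$ with $\|\mathbf{A}\mathbf{x}-\mathbf{y}\|_2 \le \sqrt{\Gamma}\eta$, and $\|\mathbf{y}\|_2 > \sqrt{\Gamma}\eta$. Then there exists a unique $\xi^* \in (0, \min\{\|\mathbf{x}\|_1, \xi_0\}]$ with $f(\xi^*) = \sqrt{\Gamma}\eta$, and any minimizer $\mathbf{z}(\xi^*)$ of $\|\mathbf{A}\mathbf{z}-\mathbf{y}\|_2$ subject to $\|\mathbf{z}\|_1 \le \xi^*$ is a solution of the $\ell^1$-minimization problem: minimize $\|\mathbf{z}\|_1$ subject to $\|\mathbf{A}\mathbf{z}-\mathbf{y}\|_2 \le \sqrt{\Gamma}\eta$. -/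
open Matrix

/-!
The value function `f(ξ) = min {‖Az - y‖₂ : ‖z‖₁ ≤ ξ}` is the infimum of the convex, Lipschitz
function `z ↦ ‖Az - y‖₂` over the `ℓ¹`-ball of radius `ξ`. Rescaling a minimizer into a smaller
ball shows that `f` is Lipschitz, hence continuous, and `f(0) = ‖y‖₂`. If `f(ξ₁) = f(ξ₂)` with
`ξ₁ < ξ₂`, a minimizer for `ξ₁` lies in the interior of the larger ball and is a local, hence by
convexity a global, minimizer of the residual; it then solves the normal equations, so
`ξ₀ ≤ ξ₁`. Thus `f` is strictly decreasing on `[0, ξ₀]`, and the intermediate value theorem gives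
`ξ*`. A feasible `z'` with `‖z'‖₁ < ‖z(ξ*)‖₁ ≤ ξ*` would give `f(‖z'‖₁) > f(ξ*) = √Γ η`,
contradicting `f(‖z'‖₁) ≤ ‖Az' - y‖₂`.
-/

open Set Metric

section BallInf

variable {E : Type*} [NormedAddCommGroup E] {g : E → ℝ} {z : E} {ξ ξ' : ℝ}

noncomputable def ballInf (g : E → ℝ) (ξ : ℝ) : ℝ := sInf (g '' closedBall 0 ξ)

theorem ballInf_eq_of_isMinOn (hz : z ∈ closedBall 0 ξ) (hmin : IsMinOn g (closedBall 0 ξ) z) :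
    ballInf g ξ = g z :=
  (hmin.isGLB hz).csInf_eq ⟨g z, mem_image_of_mem g hz⟩

theorem ballInf_zero : ballInf g 0 = g 0 := by
  simp [ballInf]

theorem forall_le_of_isMinOn_closedBall [NormedSpace ℝ E] (hconv : ConvexOn ℝ univ g)
    (hz : ‖z‖ < ξ) (hmin : IsMinOn g (closedBall 0 ξ) z) : ∀ w, g z ≤ g w :=
  IsMinOn.of_isLocalMin_of_convex_univ
    (hmin.isLocalMin (closedBall_mem_nhds_of_mem (mem_ball_zero_iff.2 hz))) hconv

variable [ProperSpace E]

theorem exists_isMinOn_closedBall (hg : Continuous g) (hξ : 0 ≤ ξ) :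
    ∃ z ∈ closedBall 0 ξ, IsMinOn g (closedBall 0 ξ) z :=
  (isCompact_closedBall 0 ξ).exists_isMinOn (nonempty_closedBall.2 hξ) hg.continuousOn

theorem ballInf_le (hg : Continuous g) (hz : ‖z‖ ≤ ξ) : ballInf g ξ ≤ g z :=
  csInf_le ((isCompact_closedBall 0 ξ).bddBelow_image hg.continuousOn)
    (mem_image_of_mem g (mem_closedBall_zero_iff.2 hz))

theorem ballInf_le_ballInf (hg : Continuous g) (hξ' : 0 ≤ ξ') (h : ξ' ≤ ξ) :
    ballInf g ξ ≤ ballInf g ξ' := by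
  obtain ⟨z, hz, hmin⟩ := exists_isMinOn_closedBall hg hξ'
  rw [ballInf_eq_of_isMinOn hz hmin]
  exact ballInf_le hg ((mem_closedBall_zero_iff.1 hz).trans h)

variable [NormedSpace ℝ E]

/-- Shrinking a minimizer for the radius `ξ` by the factor `ξ' / ξ` moves it by at most
`ξ - ξ'`. -/
theorem ballInf_le_add_mul {K : NNReal} (hg : LipschitzWith K g) (hξ' : 0 ≤ ξ') (h : ξ' ≤ ξ) :
    ballInf g ξ' ≤ ballInf g ξ + K * (ξ - ξ') := by
  obtain ⟨z, hz, hmin⟩ := exists_isMinOn_closedBall hg.continuous (hξ'.trans h)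
  rw [ballInf_eq_of_isMinOn hz hmin]
  rw [mem_closedBall_zero_iff] at hz
  rcases (hξ'.trans h).eq_or_lt with rfl | hξ
  · obtain rfl := le_antisymm h hξ'
    simpa using ballInf_le hg.continuous hz
  set s := ξ' / ξ
  have hs : s ∈ Icc (0 : ℝ) 1 := ⟨div_nonneg hξ' hξ.le, div_le_one_of_le₀ h hξ.le⟩
  have hsz : ‖s • z‖ ≤ ξ' := by
    calc ‖s • z‖ = s * ‖z‖ := by rw [norm_smul, Real.norm_of_nonneg hs.1]
      _ ≤ s * ξ := by gcongr
      _ = ξ' := div_mul_cancel₀ ξ' hξ.ne'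
  have hdist : dist (s • z) z ≤ ξ - ξ' := by
    calc dist (s • z) z = (1 - s) * ‖z‖ := by
          rw [dist_eq_norm, show s • z - z = (s - 1) • z by module, norm_smul,
            Real.norm_of_nonpos (by linarith [hs.2]), neg_sub]
      _ ≤ (1 - s) * ξ := by gcongr; linarith [hs.2]
      _ = ξ - ξ' := by rw [sub_mul, one_mul, div_mul_cancel₀ ξ' hξ.ne']
  calc ballInf g ξ' ≤ g (s • z) := ballInf_le hg.continuous hsz
    _ ≤ g z + K * dist (s • z) z := hg.le_add_mul _ _
    _ ≤ g z + K * (ξ - ξ') := by gcongr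

theorem ballInf_lipschitzOnWith {K : NNReal} (hg : LipschitzWith K g) :
    LipschitzOnWith K (ballInf g) (Ici 0) := by
  refine LipschitzOnWith.of_le_add_mul K fun a ha b hb => ?_
  rcases le_total a b with hab | hba
  · calc ballInf g a ≤ ballInf g b + K * (b - a) := ballInf_le_add_mul hg ha hab
      _ = ballInf g b + K * dist a b := by
        rw [Real.dist_eq, abs_sub_comm, abs_of_nonneg (by linarith)]
  · calc ballInf g a ≤ ballInf g b := ballInf_le_ballInf hg.continuous hb hba
      _ ≤ ballInf g b + K * dist a b := by simp only [le_add_iff_nonneg_right]; positivity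

theorem ballInf_strictAntiOn {ξ₀ : ℝ} (hg : Continuous g) (hconv : ConvexOn ℝ univ g)
    (hξ₀ : ∀ z, (∀ w, g z ≤ g w) → ξ₀ ≤ ‖z‖) : StrictAntiOn (ballInf g) (Icc 0 ξ₀) := by
  intro a ha b hb hab
  obtain ⟨z, hz, hmin⟩ := exists_isMinOn_closedBall hg ha.1
  refine (ballInf_le_ballInf hg ha.1 hab.le).lt_of_ne fun heq => ?_
  rw [mem_closedBall_zero_iff] at hz
  have hminb : IsMinOn g (closedBall 0 b) z := fun w hw => by
    rw [← ballInf_eq_of_isMinOn (mem_closedBall_zero_iff.2 hz) hmin, ← heq]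
    exact ballInf_le hg (mem_closedBall_zero_iff.1 hw)
  have := hξ₀ z (forall_le_of_isMinOn_closedBall hconv (hz.trans_lt hab) hminb)
  linarith [hb.2]

end BallInf

section LeastSquares

variable {𝕜 E F : Type*} [RCLike 𝕜] [NormedAddCommGroup E] [InnerProductSpace 𝕜 E]
  [FiniteDimensional 𝕜 E] [NormedAddCommGroup F] [InnerProductSpace 𝕜 F] [FiniteDimensional 𝕜 F]

/-- `T x` is the orthogonal projection of `y` onto the range of `T`. -/
theorem LinearMap.adjoint_apply_sub_eq_zero_of_forall_norm_le {T : E →ₗ[𝕜] F} {x : E} {y : F}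
    (h : ∀ x', ‖T x - y‖ ≤ ‖T x' - y‖) : T.adjoint (y - T x) = 0 := by
  have hinf : ‖y - T x‖ = ⨅ w : LinearMap.range T, ‖y - w‖ := by
    have hbdd : BddBelow (Set.range fun w : LinearMap.range T => ‖y - w‖) :=
      ⟨0, forall_mem_range.2 fun _ => norm_nonneg _⟩
    refine le_antisymm (le_ciInf ?_) (ciInf_le hbdd ⟨T x, LinearMap.mem_range_self T x⟩)
    rintro ⟨_, x', rfl⟩
    simpa only [norm_sub_rev y] using h x'
  have horth := (Submodule.norm_eq_iInf_iff_inner_eq_zero _ (LinearMap.mem_range_self T x)).1 hinf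
  refine ext_inner_right 𝕜 fun x' => ?_
  rw [LinearMap.adjoint_inner_left, inner_zero_left]
  exact horth _ (LinearMap.mem_range_self T x')

end LeastSquares

open WithLp (toLp ofLp)

theorem Matrix.conjTranspose_mul_self_mulVec_eq_of_forall_norm_le {𝕜 m n : Type*} [RCLike 𝕜]
    [Fintype m] [DecidableEq m] [Fintype n] [DecidableEq n] {A : Matrix m n 𝕜} {x : n → 𝕜}
    {y : m → 𝕜}
    (h : ∀ x', ‖(toLp 2 (A *ᵥ x - y) : EuclideanSpace 𝕜 m)‖ ≤
      ‖(toLp 2 (A *ᵥ x' - y) : EuclideanSpace 𝕜 m)‖) :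
    (Aᴴ * A) *ᵥ x = Aᴴ *ᵥ y := by
  have := (toEuclideanLin A).adjoint_apply_sub_eq_zero_of_forall_norm_le
    (x := toLp 2 x) (y := toLp 2 y) fun x' => by simpa [toLpLin_apply] using h x'.ofLp
  rw [← toEuclideanLin_conjTranspose_eq_adjoint] at this
  simpa [toLpLin_apply, mulVec_sub, mulVec_mulVec, sub_eq_zero, eq_comm] using this

section Residual

variable {𝕜 m n : Type*} [RCLike 𝕜] [Fintype m] [Fintype n] [DecidableEq n]

/-- The residual `‖Au - y‖₂` as a function on the `ℓ¹` space, whose closed balls are the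
constraint sets `‖u‖₁ ≤ ξ`. -/
noncomputable def residualNorm (A : Matrix m n 𝕜) (y : m → 𝕜) (u : WithLp 1 (n → 𝕜)) : ℝ :=
  ‖toLpLin 1 2 A u - toLp 2 y‖

theorem residualNorm_lipschitzWith (A : Matrix m n 𝕜) (y : m → 𝕜) :
    ∃ K, LipschitzWith K (residualNorm A y) := by
  let T := LinearMap.toContinuousLinearMap (toLpLin 1 2 A)
  refine ⟨‖T‖₊, LipschitzWith.of_dist_le_mul fun u v => ?_⟩
  calc dist (residualNorm A y u) (residualNorm A y v) ≤ ‖(T u - toLp 2 y) - (T v - toLp 2 y)‖ :=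
        dist_norm_norm_le _ _
    _ = dist (T u) (T v) := by rw [sub_sub_sub_cancel_right, dist_eq_norm]
    _ ≤ ‖T‖₊ * dist u v := T.lipschitz.dist_le_mul u v

theorem residualNorm_convexOn (A : Matrix m n 𝕜) (y : m → 𝕜) :
    ConvexOn ℝ univ (residualNorm A y) := by
  have h := (convexOn_norm (E := WithLp 2 (m → 𝕜)) convex_univ).comp_affineMap
    (((toLpLin 1 2 A).restrictScalars ℝ).toAffineMap - AffineMap.const ℝ _ (toLp 2 y))
  exact h

end Residual

section Concrete

variable {Γ D : ℕ} (A : Matrix (Fin Γ) (Fin D) ℂ) (y : Fin Γ → ℂ)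

theorem l1norm_eq_norm (z : Fin D → ℂ) : l1norm z = ‖toLp 1 z‖ := by
  rw [PiLp.norm_eq_of_L1]
  rfl

theorem l1norm_nonneg (z : Fin D → ℂ) : 0 ≤ l1norm z :=
  l1norm_eq_norm z ▸ norm_nonneg _

theorem l2norm_eq_norm (v : Fin Γ → ℂ) : l2norm v = ‖toLp 2 v‖ := by
  rw [PiLp.norm_eq_of_L2]
  rfl

theorem residualNorm_toLp (z : Fin D → ℂ) :
    residualNorm A y (toLp 1 z) = l2norm (A *ᵥ z - y) := by
  rw [residualNorm, l2norm_eq_norm, toLpLin_toLp, WithLp.toLp_sub]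
  rfl

theorem resMin_eq_ballInf : resMin A y = ballInf (residualNorm A y) := by
  ext ξ
  rw [resMin, ballInf]
  congr 1
  ext r
  constructor
  · rintro ⟨z, hz, rfl⟩
    exact ⟨toLp 1 z, by rwa [mem_closedBall_zero_iff, ← l1norm_eq_norm], residualNorm_toLp A y z⟩
  · rintro ⟨u, hu, rfl⟩
    exact ⟨ofLp u, by rwa [l1norm_eq_norm, ← mem_closedBall_zero_iff],
      (residualNorm_toLp A y (ofLp u)).symm⟩

theorem resMin_zero : resMin A y 0 = l2norm y := by
  rw [resMin_eq_ballInf, ballInf_zero, l2norm_eq_norm, residualNorm, map_zero, zero_sub, norm_neg]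

theorem resMin_le {ξ : ℝ} {z : Fin D → ℂ} (hz : l1norm z ≤ ξ) :
    resMin A y ξ ≤ l2norm (A *ᵥ z - y) :=
  csInf_le ⟨0, by rintro _ ⟨_, _, rfl⟩; exact Real.sqrt_nonneg _⟩ ⟨z, hz, rfl⟩

theorem resMin_eq_of_forall_le {ξ : ℝ} {z : Fin D → ℂ} (hz : l1norm z ≤ ξ)
    (hmin : ∀ z', l1norm z' ≤ ξ → l2norm (A *ᵥ z - y) ≤ l2norm (A *ᵥ z' - y)) :
    resMin A y ξ = l2norm (A *ᵥ z - y) :=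
  IsLeast.csInf_eq ⟨⟨z, hz, rfl⟩, by rintro _ ⟨z', hz', rfl⟩; exact hmin z' hz'⟩

theorem xiZero_nonneg : 0 ≤ xiZero A y :=
  Real.sInf_nonneg <| by rintro _ ⟨z, -, rfl⟩; exact l1norm_nonneg z

theorem xiZero_le_norm {u : WithLp 1 (Fin D → ℂ)}
    (hu : ∀ w, residualNorm A y u ≤ residualNorm A y w) :
    xiZero A y ≤ ‖u‖ := by
  have hnormal : (Aᴴ * A) *ᵥ ofLp u = Aᴴ *ᵥ y :=
    conjTranspose_mul_self_mulVec_eq_of_forall_norm_le fun x' => by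
      have := hu (toLp 1 x')
      rwa [← WithLp.toLp_ofLp (p := 1) u, residualNorm_toLp, residualNorm_toLp, l2norm_eq_norm,
        l2norm_eq_norm] at this
  refine csInf_le ⟨0, ?_⟩ ⟨ofLp u, hnormal, l1norm_eq_norm (ofLp u)⟩
  rintro _ ⟨z, -, rfl⟩
  exact l1norm_nonneg z

theorem resMin_strictAntiOn : StrictAntiOn (resMin A y) (Icc 0 (xiZero A y)) := by
  obtain ⟨K, hK⟩ := residualNorm_lipschitzWith A y
  rw [resMin_eq_ballInf]
  exact ballInf_strictAntiOn hK.continuous (residualNorm_convexOn A y) fun _ hu =>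
    xiZero_le_norm A y hu

theorem resMin_continuousOn : ContinuousOn (resMin A y) (Ici 0) := by
  obtain ⟨K, hK⟩ := residualNorm_lipschitzWith A y
  rw [resMin_eq_ballInf]
  exact (ballInf_lipschitzOnWith hK).continuousOn

end Concrete

/-- If `√Γ η > f(ξ₀)`, some `x` satisfies `‖Ax - y‖₂ ≤ √Γ η`, and `‖y‖₂ > √Γ η`, then there
is a unique `ξ* ∈ (0, min{‖x‖₁, ξ₀}]` with `f(ξ*) = √Γ η`, and any minimizer of
`‖Az - y‖₂` subject to `‖z‖₁ ≤ ξ*` solves the `ℓ¹`-minimization problem: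
minimize `‖z‖₁` subject to `‖Az - y‖₂ ≤ √Γ η`. -/
theorem stmt10 {Γ D : ℕ} (A : Matrix (Fin Γ) (Fin D) ℂ) (y : Fin Γ → ℂ) (η : ℝ)
    (hη : resMin A y (xiZero A y) < Real.sqrt Γ * η)
    (x : Fin D → ℂ) (hx : l2norm (A.mulVec x - y) ≤ Real.sqrt Γ * η)
    (hy : Real.sqrt Γ * η < l2norm y) :
    (∃! ξ : ℝ, ξ ∈ Set.Ioc 0 (min (l1norm x) (xiZero A y)) ∧
        resMin A y ξ = Real.sqrt Γ * η) ∧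
    (∀ ξ : ℝ, ξ ∈ Set.Ioc 0 (min (l1norm x) (xiZero A y)) →
      resMin A y ξ = Real.sqrt Γ * η →
      ∀ z : Fin D → ℂ, l1norm z ≤ ξ →
        (∀ z' : Fin D → ℂ, l1norm z' ≤ ξ →
          l2norm (A.mulVec z - y) ≤ l2norm (A.mulVec z' - y)) →
        l2norm (A.mulVec z - y) ≤ Real.sqrt Γ * η ∧
        (∀ z' : Fin D → ℂ, l2norm (A.mulVec z' - y) ≤ Real.sqrt Γ * η →
          l1norm z ≤ l1norm z')) := by
  set c := Real.sqrt Γ * η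
  set m := min (l1norm x) (xiZero A y)
  have hm : 0 ≤ m := le_min (l1norm_nonneg x) (xiZero_nonneg A y)
  have hIoc : Ioc 0 m ⊆ Icc 0 (xiZero A y) := fun ξ hξ =>
    ⟨hξ.1.le, hξ.2.trans (min_le_right _ _)⟩
  have hfm : resMin A y m ≤ c := by
    rcases min_choice (l1norm x) (xiZero A y) with h | h <;> simp only [m, h]
    exacts [(resMin_le A y le_rfl).trans hx, hη.le]
  obtain ⟨ξ, hξ, hξc⟩ := intermediate_value_Icc' hm
    ((resMin_continuousOn A y).mono Icc_subset_Ici_self) ⟨hfm, resMin_zero A y ▸ hy.le⟩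
  have hξ0 : 0 < ξ := hξ.1.lt_of_ne (by rintro rfl; rw [resMin_zero] at hξc; linarith)
  refine ⟨⟨ξ, ⟨⟨hξ0, hξ.2⟩, hξc⟩, fun ξ' h =>
    (resMin_strictAntiOn A y).injOn (hIoc h.1) (hIoc ⟨hξ0, hξ.2⟩) (h.2.trans hξc.symm)⟩, ?_⟩
  intro ξ hξ hξc z hz hmin
  have hzc : l2norm (A *ᵥ z - y) = c := (resMin_eq_of_forall_le A y hz hmin).symm.trans hξc
  refine ⟨hzc.le, fun z' hz' => le_of_not_gt fun hlt => ?_⟩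
  have hz'ξ : l1norm z' < ξ := hlt.trans_le hz
  have := resMin_strictAntiOn A y ⟨l1norm_nonneg z', hz'ξ.le.trans (hIoc hξ).2⟩ (hIoc hξ) hz'ξ
  linarith [resMin_le A y (le_refl (l1norm z'))]
end

section
/- Let $H, H'$ be $n$-qubit Hamiltonians, $\rho_0$ a density matrix, $\rho(t) = e^{-iHt}\rho_0 e^{iHt}$ and $\rho'(t) = e^{-iH't}\rho_0 e^{iH't}$, and $O$ an observable. Then $|\mathrm{Tr}[O\rho(t)] - \mathrm{Tr}[O\rho'(t)]| \le 2t\,\|O\|_\infty\,\|\boldsymbol{\mu} - \boldsymbol{\mu}'\|_1$, where $\boldsymbol{\mu}, \boldsymbol{\mu}'$ are the Pauli coefficient vectors of $H, H'$ (with identity coefficient zero). -/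
open Matrix Complex
open scoped Matrix.Norms.L2Operator ComplexOrder

noncomputable def pauliMat : Fin 4 → Matrix (Fin 2) (Fin 2) ℂ
  | 0 => 1
  | 1 => !![0, 1; 1, 0]
  | 2 => !![0, -Complex.I; Complex.I, 0]
  | 3 => !![1, 0; 0, -1]

noncomputable def pauliString {n : ℕ} (s : Fin n → Fin 4) :
    Matrix (Fin n → Fin 2) (Fin n → Fin 2) ℂ :=
  fun x y => ∏ i, pauliMat (s i) (x i) (y i)

/-!
Both evolutions are unitary conjugations, so the difference of expectation values splits as
`Tr[(W - W') O U ρ₀] + Tr[W' O (U - U') ρ₀]` with `U = e^{-iHt}`, `W = e^{iHt}`. A density matrix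
makes `M ↦ Tr[M ρ₀]` a state, of norm one, so each term is at most `‖O‖` times the distance of
the two propagators. That distance is at most `t ‖H - H'‖`: the curve `s ↦ e^{sA} e^{-sA'}` for
skew-adjoint `A, A'` has derivative `e^{sA} (A - A') e^{-sA'}`, of norm `‖A - A'‖`. Finally Pauli
strings are unitary, so `‖H - H'‖ ≤ ‖μ - μ'‖₁`.
-/

section CStarAlgebra

open NormedSpace

variable {A : Type*} [CStarAlgebra A]

theorem norm_exp_sub_exp_le_of_mem_skewAdjoint {a b : A} (ha : a ∈ skewAdjoint A)
    (hb : b ∈ skewAdjoint A) : ‖exp a - exp b‖ ≤ ‖a - b‖ := by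
  let +nondep : NormedAlgebra ℚ A := .restrictScalars ℚ ℂ A
  have hunitary {c : A} (hc : c ∈ skewAdjoint A) (s : ℝ) : exp (s • c) ∈ unitary A :=
    exp_mem_unitary_of_mem_skewAdjoint (skewAdjoint.smul_mem s hc)
  let f : ℝ → A := fun s => exp (s • a) * exp (s • -b)
  have hf (s : ℝ) : HasDerivAt f (exp (s • a) * (a - b) * exp (s • -b)) s := by
    refine ((hasDerivAt_exp_smul_const a s).mul
      (hasDerivAt_exp_smul_const' (-b) s)).congr_deriv ?_
    noncomm_ring
  have hf_norm (s : ℝ) : ‖exp (s • a) * (a - b) * exp (s • -b)‖ = ‖a - b‖ := by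
    rw [CStarRing.norm_mul_mem_unitary _ (hunitary (neg_mem hb) s),
      CStarRing.norm_mem_unitary_mul _ (hunitary ha s)]
  have hf_sub : ‖f 1 - f 0‖ ≤ ‖a - b‖ :=
    norm_image_sub_le_of_norm_deriv_le_segment_01' (fun s _ => (hf s).hasDerivWithinAt)
      fun s _ => (hf_norm s).le
  have hexp_neg_mul : exp (-b) * exp b = 1 := by
    rw [← exp_add_of_commute (Commute.refl b).neg_left, neg_add_cancel, NormedSpace.exp_zero]
  have hsub : exp a - exp b = (f 1 - f 0) * exp b := by
    simp only [f, one_smul, zero_smul, NormedSpace.exp_zero, mul_one, sub_mul, mul_assoc,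
      hexp_neg_mul, one_mul]
  rwa [hsub, CStarRing.norm_mul_mem_unitary _ (exp_mem_unitary_of_mem_skewAdjoint hb)]

theorem norm_exp_smul_sub_exp_smul_le {h h' : A} (hh : IsSelfAdjoint h) (hh' : IsSelfAdjoint h')
    {c : ℂ} (hc : c ∈ skewAdjoint ℂ) : ‖exp (c • h) - exp (c • h')‖ ≤ ‖c‖ * ‖h - h'‖ := by
  simpa [← smul_sub, norm_smul] using norm_exp_sub_exp_le_of_mem_skewAdjoint
    (hh.smul_mem_skewAdjoint hc) (hh'.smul_mem_skewAdjoint hc)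

theorem exp_smul_mem_unitary {h : A} (hh : IsSelfAdjoint h) {c : ℂ} (hc : c ∈ skewAdjoint ℂ) :
    exp (c • h) ∈ unitary A :=
  let +nondep : NormedAlgebra ℚ A := .restrictScalars ℚ ℂ A
  exp_mem_unitary_of_mem_skewAdjoint (hh.smul_mem_skewAdjoint hc)

end CStarAlgebra

namespace Matrix

variable {m n 𝕜 : Type*} [Fintype m] [Fintype n] [DecidableEq n] [RCLike 𝕜]

theorem norm_entry_le_l2_opNorm (M : Matrix m n 𝕜) (i : m) (j : n) : ‖M i j‖ ≤ ‖M‖ := by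
  simpa using (PiLp.norm_apply_le _ i).trans
    (M.l2_opNorm_mulVec (EuclideanSpace.single j 1))

variable {q : Type*} [Fintype q] [DecidableEq q]

theorem PosSemidef.norm_trace_mul_le {ρ : Matrix q q 𝕜} (hρ : ρ.PosSemidef)
    (M : Matrix q q 𝕜) : ‖(M * ρ).trace‖ ≤ ‖M‖ * ‖ρ.trace‖ := by
  set V : Matrix q q 𝕜 := (hρ.1.eigenvectorUnitary : Matrix q q 𝕜)
  set d := hρ.1.eigenvalues
  have hd (i : q) : 0 ≤ d i := hρ.eigenvalues_nonneg i
  have hV : V ∈ unitary (Matrix q q 𝕜) := hρ.1.eigenvectorUnitary.2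
  have htrace (N : Matrix q q 𝕜) : (N * ρ).trace = ∑ i, (star V * N * V) i i * d i := by
    conv_lhs => rw [hρ.1.spectral_theorem, Unitary.conjStarAlgAut_apply]
    rw [← mul_assoc, ← mul_assoc, trace_mul_cycle, ← mul_assoc]
    simp [trace, mul_diagonal, V, d]
  have hd_sum : ‖ρ.trace‖ = ∑ i, d i := by
    have htrace_one := htrace 1
    simp only [one_mul, mul_one, Unitary.star_mul_self_of_mem hV, one_apply_eq] at htrace_one
    rw [htrace_one, ← RCLike.ofReal_sum, RCLike.norm_ofReal,
      abs_of_nonneg (Finset.sum_nonneg fun i _ => hd i)]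
  have hconj : ‖star V * M * V‖ = ‖M‖ := by
    rw [CStarRing.norm_mul_mem_unitary _ hV,
      CStarRing.norm_mem_unitary_mul _ (Unitary.star_mem hV)]
  rw [htrace M, hd_sum, Finset.mul_sum]
  refine (norm_sum_le _ _).trans (Finset.sum_le_sum fun i _ => ?_)
  rw [norm_mul, RCLike.norm_ofReal, abs_of_nonneg (hd i)]
  exact mul_le_mul_of_nonneg_right (hconj ▸ norm_entry_le_l2_opNorm _ i i) (hd i)

theorem norm_trace_mul_conj_sub_le {ρ : Matrix q q 𝕜} (hρ : ρ.PosSemidef) (O : Matrix q q 𝕜)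
    {U U' W W' : Matrix q q 𝕜} (hU : U ∈ unitary (Matrix q q 𝕜))
    (hW' : W' ∈ unitary (Matrix q q 𝕜)) :
    ‖(O * (U * ρ * W)).trace - (O * (U' * ρ * W')).trace‖ ≤
      ‖O‖ * (‖U - U'‖ + ‖W - W'‖) * ‖ρ.trace‖ := by
  have hcycle (X Y : Matrix q q 𝕜) : (O * (X * ρ * Y)).trace = (Y * O * X * ρ).trace := by
    rw [trace_mul_comm O, mul_assoc (X * ρ), trace_mul_comm, ← mul_assoc]
  have hsplit : (O * (U * ρ * W)).trace - (O * (U' * ρ * W')).trace =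
      ((W - W') * O * U * ρ).trace + (W' * O * (U - U') * ρ).trace := by
    rw [hcycle, hcycle, ← trace_sub, ← trace_add]
    congr 1
    noncomm_ring
  have hW'O : ‖W' * O * (U - U')‖ ≤ ‖O‖ * ‖U - U'‖ := by
    rw [mul_assoc, CStarRing.norm_mem_unitary_mul _ hW']
    exact norm_mul_le _ _
  have hOU : ‖(W - W') * O * U‖ ≤ ‖O‖ * ‖W - W'‖ := by
    rw [CStarRing.norm_mul_mem_unitary _ hU, mul_comm ‖O‖]
    exact norm_mul_le _ _
  rw [hsplit]
  calc _ ≤ ‖((W - W') * O * U * ρ).trace‖ + ‖(W' * O * (U - U') * ρ).trace‖ := norm_add_le _ _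
    _ ≤ ‖(W - W') * O * U‖ * ‖ρ.trace‖ + ‖W' * O * (U - U')‖ * ‖ρ.trace‖ :=
      add_le_add (hρ.norm_trace_mul_le _) (hρ.norm_trace_mul_le _)
    _ ≤ ‖O‖ * ‖W - W'‖ * ‖ρ.trace‖ + ‖O‖ * ‖U - U'‖ * ‖ρ.trace‖ := by gcongr
    _ = ‖O‖ * (‖U - U'‖ + ‖W - W'‖) * ‖ρ.trace‖ := by ring

end Matrix

section Pauli

theorem pauliMat_conjTranspose (k : Fin 4) : (pauliMat k)ᴴ = pauliMat k := by
  fin_cases k <;> ext i j <;> fin_cases i <;> fin_cases j <;>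
    simp [pauliMat, conjTranspose_apply, one_apply]

theorem pauliMat_mul_self (k : Fin 4) : pauliMat k * pauliMat k = 1 := by
  fin_cases k <;> ext i j <;> fin_cases i <;> fin_cases j <;>
    simp [pauliMat, mul_apply, Fin.sum_univ_two, one_apply]

variable {n : ℕ}

theorem pauliString_conjTranspose (s : Fin n → Fin 4) : (pauliString s)ᴴ = pauliString s := by
  ext x y
  simp only [conjTranspose_apply, pauliString, star_prod]
  exact Finset.prod_congr rfl fun i _ => congr_fun₂ (pauliMat_conjTranspose (s i)) (x i) (y i)

theorem pauliString_mul (s s' : Fin n → Fin 4) :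
    pauliString s * pauliString s' =
      fun x y => ∏ i, (pauliMat (s i) * pauliMat (s' i)) (x i) (y i) := by
  ext x y
  simp only [pauliString, mul_apply, ← Finset.prod_mul_distrib]
  rw [← Finset.sum_prod_piFinset, Fintype.piFinset_univ]

theorem pauliString_mul_self (s : Fin n → Fin 4) : pauliString s * pauliString s = 1 := by
  ext x y
  simp [pauliString_mul, pauliMat_mul_self, one_apply, Finset.prod_boole, funext_iff]

theorem pauliString_mem_unitary (s : Fin n → Fin 4) :
    pauliString s ∈ unitary (Matrix (Fin n → Fin 2) (Fin n → Fin 2) ℂ) := by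
  have hstar : star (pauliString s) = pauliString s := pauliString_conjTranspose s
  exact ⟨by rw [hstar, pauliString_mul_self], by rw [hstar, pauliString_mul_self]⟩

theorem isSelfAdjoint_sum_smul_pauliString (μ : (Fin n → Fin 4) → ℝ) :
    IsSelfAdjoint (∑ p, (μ p : ℂ) • pauliString p) :=
  isSelfAdjoint_sum _ fun p _ =>
    IsSelfAdjoint.smul (conj_ofReal (μ p)) (pauliString_conjTranspose p)

theorem norm_sum_smul_pauliString_sub_le (μ μ' : (Fin n → Fin 4) → ℝ) :
    ‖∑ p, (μ p : ℂ) • pauliString p - ∑ p, (μ' p : ℂ) • pauliString p‖ ≤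
      ∑ p, |μ p - μ' p| := by
  rw [← Finset.sum_sub_distrib]
  refine (norm_sum_le _ _).trans (Finset.sum_le_sum fun p _ => ?_)
  rw [← sub_smul, norm_smul, CStarRing.norm_of_mem_unitary (pauliString_mem_unitary p), mul_one,
    ← ofReal_sub, norm_real, Real.norm_eq_abs]

end Pauli

theorem stmt14_general {n : ℕ} (μ μ' : (Fin n → Fin 4) → ℝ)
    (ρ₀ : Matrix (Fin n → Fin 2) (Fin n → Fin 2) ℂ)
    (hρ : ρ₀.PosSemidef) (hρtr : ρ₀.trace = 1)
    (O : Matrix (Fin n → Fin 2) (Fin n → Fin 2) ℂ)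
    (t : ℝ) (ht : 0 ≤ t) :
    ‖((O * (NormedSpace.exp ((-Complex.I * (t : ℂ)) •
              ∑ p : Fin n → Fin 4, (μ p : ℂ) • pauliString p) * ρ₀ *
            NormedSpace.exp ((Complex.I * (t : ℂ)) •
              ∑ p : Fin n → Fin 4, (μ p : ℂ) • pauliString p))).trace -
         (O * (NormedSpace.exp ((-Complex.I * (t : ℂ)) •
              ∑ p : Fin n → Fin 4, (μ' p : ℂ) • pauliString p) * ρ₀ *
            NormedSpace.exp ((Complex.I * (t : ℂ)) •
              ∑ p : Fin n → Fin 4, (μ' p : ℂ) • pauliString p))).trace)‖ ≤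
      2 * t * ‖O‖ * ∑ p : Fin n → Fin 4, |μ p - μ' p| := by
  set H := ∑ p : Fin n → Fin 4, (μ p : ℂ) • pauliString p
  set H' := ∑ p : Fin n → Fin 4, (μ' p : ℂ) • pauliString p
  have hH := isSelfAdjoint_sum_smul_pauliString μ
  have hH' := isSelfAdjoint_sum_smul_pauliString μ'
  have hevolution {c : ℂ} (hc : c ∈ skewAdjoint ℂ) (hct : ‖c‖ = t) :
      ‖NormedSpace.exp (c • H) - NormedSpace.exp (c • H')‖ ≤ t * ∑ p, |μ p - μ' p| :=
    calc _ ≤ ‖c‖ * ‖H - H'‖ := norm_exp_smul_sub_exp_smul_le hH hH' hc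
      _ ≤ t * ∑ p, |μ p - μ' p| := by
        rw [hct]
        gcongr
        exact norm_sum_smul_pauliString_sub_le μ μ'
  have hskew : -I * t ∈ skewAdjoint ℂ := by simp [skewAdjoint.mem_iff]
  have hskew' : I * t ∈ skewAdjoint ℂ := by simp [skewAdjoint.mem_iff]
  have hnorm : ‖-I * t‖ = t := by simp [abs_of_nonneg ht]
  have hnorm' : ‖I * t‖ = t := by simp [abs_of_nonneg ht]
  calc _ ≤ ‖O‖ * (t * ∑ p, |μ p - μ' p| + t * ∑ p, |μ p - μ' p|) * ‖ρ₀.trace‖ := by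
        refine (norm_trace_mul_conj_sub_le hρ O (exp_smul_mem_unitary hH hskew)
          (exp_smul_mem_unitary hH' hskew')).trans ?_
        gcongr
        exacts [hevolution hskew hnorm, hevolution hskew' hnorm']
    _ = 2 * t * ‖O‖ * ∑ p, |μ p - μ' p| := by
        rw [hρtr, norm_one]
        ring

/-- For Hamiltonians `H = ∑ μ_P P`, `H' = ∑ μ'_P P` (identity coefficient zero), a density
matrix `ρ₀`, an observable `O` and `t ≥ 0`:
`|Tr[O ρ(t)] − Tr[O ρ'(t)]| ≤ 2t ‖O‖∞ ‖μ − μ'‖₁`, where `ρ(t) = e^{-iHt} ρ₀ e^{iHt}`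
and `ρ'(t) = e^{-iH't} ρ₀ e^{iH't}`. -/
theorem stmt14 {n : ℕ} (μ μ' : (Fin n → Fin 4) → ℝ)
    (hμI : μ (fun _ => 0) = 0) (hμ'I : μ' (fun _ => 0) = 0)
    (ρ₀ : Matrix (Fin n → Fin 2) (Fin n → Fin 2) ℂ)
    (hρ : ρ₀.PosSemidef) (hρtr : ρ₀.trace = 1)
    (O : Matrix (Fin n → Fin 2) (Fin n → Fin 2) ℂ) (hO : O.IsHermitian)
    (t : ℝ) (ht : 0 ≤ t) :
    ‖((O * (NormedSpace.exp ((-Complex.I * (t : ℂ)) •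
              ∑ p : Fin n → Fin 4, (μ p : ℂ) • pauliString p) * ρ₀ *
            NormedSpace.exp ((Complex.I * (t : ℂ)) •
              ∑ p : Fin n → Fin 4, (μ p : ℂ) • pauliString p))).trace -
         (O * (NormedSpace.exp ((-Complex.I * (t : ℂ)) •
              ∑ p : Fin n → Fin 4, (μ' p : ℂ) • pauliString p) * ρ₀ *
            NormedSpace.exp ((Complex.I * (t : ℂ)) •
              ∑ p : Fin n → Fin 4, (μ' p : ℂ) • pauliString p))).trace)‖ ≤
      2 * t * ‖O‖ * ∑ p : Fin n → Fin 4, |μ p - μ' p| :=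
  stmt14_general μ μ' ρ₀ hρ hρtr O t ht
end

section
/- Let $\theta \in [a,b] \subset \mathbb{R}$ and let $z \in \mathbb{C}$ satisfy $|z - e^{i\theta \pi/(b-a)}| < 1/2$. Define $w = e^{-i(a+b)\pi/(2(b-a))} z$. If $\mathrm{Im}(w) \le 0$ then $\theta \in [a, (a+2b)/3]$, and if $\mathrm{Im}(w) > 0$ then $\theta \in [(2a+b)/3, b]$. -/
/-!
Rotating by `e^{-i(a+b)π/(2(b-a))}` turns `e^{iθπ/(b-a)}` into `e^{ix}` with
`x = π(θ - (a+b)/2)/(b-a) ∈ [-π/2, π/2]`, and a unit rotation moves imaginary parts by at most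
`|z - e^{iθπ/(b-a)}| < 1/2`. Hence `Im w ≤ 0` forces `sin x < 1/2`, i.e. `x < π/6`, i.e.
`θ < (a+2b)/3`; symmetrically `Im w > 0` forces `sin x > -1/2` and `θ > (2a+b)/3`.
-/

open Real Set

noncomputable def phaseAngle (a b θ : ℝ) : ℝ := π / (b - a) * (θ - (a + b) / 2)

theorem norm_exp_neg_I_mul_ofReal (r : ℝ) : ‖Complex.exp (-Complex.I * r)‖ = 1 := by
  rw [show -Complex.I * r = (-r : ℝ) * Complex.I by push_cast; ring, Complex.norm_exp_ofReal_mul_I]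

theorem abs_im_mul_sub_im_mul_lt {u z e : ℂ} {r : ℝ} (hu : ‖u‖ = 1) (h : ‖z - e‖ < r) :
    |(u * z).im - (u * e).im| < r :=
  calc |(u * z).im - (u * e).im| = |(u * (z - e)).im| := by rw [mul_sub, Complex.sub_im]
    _ ≤ ‖u * (z - e)‖ := Complex.abs_im_le_norm _
    _ = ‖z - e‖ := by rw [norm_mul, hu, one_mul]
    _ < r := h

theorem sin_lt_one_half_iff {x : ℝ} (hx : x ∈ Icc (-(π / 2)) (π / 2)) :
    sin x < 1 / 2 ↔ x < π / 6 := by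
  rw [← sin_pi_div_six]
  exact strictMonoOn_sin.lt_iff_lt hx ⟨by linarith [pi_pos], by linarith [pi_pos]⟩

theorem neg_one_half_lt_sin_iff {x : ℝ} (hx : x ∈ Icc (-(π / 2)) (π / 2)) :
    -(1 / 2) < sin x ↔ -(π / 6) < x := by
  rw [← sin_pi_div_six, ← sin_neg]
  exact strictMonoOn_sin.lt_iff_lt ⟨by linarith [pi_pos], by linarith [pi_pos]⟩ hx

section phaseAngle

variable {a b θ : ℝ}

theorem phaseAngle_mem_Icc (hab : a < b) (hθ : θ ∈ Icc a b) :
    phaseAngle a b θ ∈ Icc (-(π / 2)) (π / 2) := by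
  have hd : 0 < b - a := sub_pos.2 hab
  obtain ⟨ha, hb⟩ := hθ
  constructor
  · rw [phaseAngle, div_mul_eq_mul_div, le_div_iff₀ hd]; nlinarith [pi_pos]
  · rw [phaseAngle, div_mul_eq_mul_div, div_le_iff₀ hd]; nlinarith [pi_pos]

theorem phaseAngle_lt_pi_div_six_iff (hab : a < b) :
    phaseAngle a b θ < π / 6 ↔ θ < (a + 2 * b) / 3 := by
  have hd : 0 < b - a := sub_pos.2 hab
  rw [phaseAngle, div_mul_eq_mul_div, div_lt_iff₀ hd]
  constructor <;> intro h <;> nlinarith [pi_pos]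

theorem neg_pi_div_six_lt_phaseAngle_iff (hab : a < b) :
    -(π / 6) < phaseAngle a b θ ↔ (2 * a + b) / 3 < θ := by
  have hd : 0 < b - a := sub_pos.2 hab
  rw [phaseAngle, div_mul_eq_mul_div, lt_div_iff₀ hd]
  constructor <;> intro h <;> nlinarith [pi_pos]

theorem exp_neg_midpoint_mul_exp (hab : a ≠ b) :
    Complex.exp (-Complex.I * (((a : ℂ) + b) * π / (2 * ((b : ℂ) - a)))) *
      Complex.exp (Complex.I * θ * (π / ((b : ℂ) - a))) =
      Complex.exp (phaseAngle a b θ * Complex.I) := by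
  have hd : (b : ℂ) - a ≠ 0 := sub_ne_zero.2 (Complex.ofReal_injective.ne hab.symm)
  rw [← Complex.exp_add, phaseAngle]
  congr 1
  push_cast
  field_simp
  ring

end phaseAngle

/-- The decision step of robust frequency estimation: if `θ ∈ [a,b]` and
`|z − e^{iθπ/(b−a)}| < 1/2`, then with `w = e^{−i(a+b)π/(2(b−a))} z`:
`Im w ≤ 0` implies `θ ∈ [a, (a+2b)/3]`, and `Im w > 0` implies `θ ∈ [(2a+b)/3, b]`. -/
theorem stmt17 (a b θ : ℝ) (hab : a < b) (hθ : θ ∈ Set.Icc a b) (z : ℂ)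
    (hz : ‖z - Complex.exp (Complex.I * (θ : ℂ) * ((π : ℂ) / ((b : ℂ) - a)))‖ <
      1 / 2) :
    ((Complex.exp (-Complex.I * (((a : ℂ) + b) * (π : ℂ) / (2 * ((b : ℂ) - a)))) * z).im ≤ 0 →
      θ ∈ Set.Icc a ((a + 2 * b) / 3)) ∧
    (0 < (Complex.exp (-Complex.I * (((a : ℂ) + b) * (π : ℂ) / (2 * ((b : ℂ) - a)))) * z).im →
      θ ∈ Set.Icc ((2 * a + b) / 3) b) := by
  have hx := phaseAngle_mem_Icc hab hθ
  have hu : ‖Complex.exp (-Complex.I * (((a : ℂ) + b) * π / (2 * ((b : ℂ) - a))))‖ = 1 := by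
    exact_mod_cast norm_exp_neg_I_mul_ofReal ((a + b) * π / (2 * (b - a)))
  have hdev := abs_im_mul_sub_im_mul_lt hu hz
  rw [exp_neg_midpoint_mul_exp hab.ne, Complex.exp_ofReal_mul_I_im, abs_lt] at hdev
  refine ⟨fun hw => ⟨hθ.1, ?_⟩, fun hw => ⟨?_, hθ.2⟩⟩
  · exact ((phaseAngle_lt_pi_div_six_iff hab).1 ((sin_lt_one_half_iff hx).1 (by linarith))).le
  · exact ((neg_pi_div_six_lt_phaseAngle_iff hab).1
      ((neg_one_half_lt_sin_iff hx).1 (by linarith))).le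
end
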